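/- arXiv:2003.02424 — 5 statements merged into one kernel-verified Lean document; each statement's English description precedes it below -/
import Mathlib

section
/- Let V be a finite set, let M be a matroid on V with independent-set family ℐ ⊆ 2^V, and let n ≥ 1. On the ground set V × {1,…,n} (the disjoint union of n copies of V), for a subset S ⊆ V × {1,…,n} and i ∈ {1,…,n} write X_i(S) = {v ∈ V : (v,i) ∈ S}. Then the family ℐ̃ = { S ⊆ V × {1,…,n} : ⋂_{i=1}^n X_i(S) ∈ ℐ } is the independent-set family of a matroid on V × {1,…,n}; that is, ℐ̃ contains the empty set, is closed under taking subsets, and satisfies the augmentation axiom: for every S, T ∈ ℐ̃ with |S| < |T| there exists e ∈ T \ S such that S ∪ {e} ∈ ℐ̃. -/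
/-!
The family is the series extension of `M` that replaces every `v ∈ V` by the series class
`{v} × ι`: a set is independent iff its full fibres form an independent set of `M`.

Augmentation for `|S| < |T|`, writing `X(S) = fullFibers S`: if some `e ∈ T \ S` has a second
index `j ≠ e.2` with `(e.1, j) ∉ S`, then adding `e` completes no fibre. Otherwise every fibre
of `S` that meets `T \ S` misses exactly one index, so fibre sizes capped at `|ι| - 1` can only
drop from `S` to `T`; as `|S| = ∑ min(|S_v|, |ι| - 1) + |X(S)|`, this forces `|X(S)| < |X(T)|`.
Augmenting `X(S)` in `M` by some `v` and adding a missing `(v, i)` then works.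
-/

open Finset

section

variable {V ι : Type*} [DecidableEq V] [Fintype ι] [DecidableEq ι]

def fiber (S : Finset (V × ι)) (v : V) : Finset ι := univ.filter fun i => (v, i) ∈ S

@[simp]
lemma mem_fiber {S : Finset (V × ι)} {v : V} {i : ι} : i ∈ fiber S v ↔ (v, i) ∈ S := by
  simp [fiber]

lemma min_card_fiber_le_of_forall_mem {S T : Finset (V × ι)}
    (hcrit : ∀ e ∈ T \ S, ∀ j ≠ e.2, (e.1, j) ∈ S) (v : V) :
    min #(fiber T v) (Fintype.card ι - 1) ≤ min #(fiber S v) (Fintype.card ι - 1) := by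
  by_cases hsub : fiber T v ⊆ fiber S v
  · exact min_le_min_right _ (card_le_card hsub)
  · obtain ⟨i, hiT, hiS⟩ := not_subset.1 hsub
    have hiTS : (v, i) ∈ T \ S := mem_sdiff.2 ⟨mem_fiber.1 hiT, mt mem_fiber.2 hiS⟩
    have : univ.erase i ⊆ fiber S v := fun j hj =>
      mem_fiber.2 (hcrit (v, i) hiTS j (ne_of_mem_erase hj))
    have := card_le_card this
    rw [card_erase_of_mem (mem_univ i), card_univ] at this
    omega

variable [Fintype V]

def fullFibers (S : Finset (V × ι)) : Finset V := univ.filter fun v => ∀ i, (v, i) ∈ S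

@[simp]
lemma mem_fullFibers {S : Finset (V × ι)} {v : V} :
    v ∈ fullFibers S ↔ ∀ i, (v, i) ∈ S := by
  simp [fullFibers]

lemma mem_fullFibers_iff_fiber_eq_univ {S : Finset (V × ι)} {v : V} :
    v ∈ fullFibers S ↔ fiber S v = univ := by
  simp [Finset.eq_univ_iff_forall]

lemma fullFibers_empty [Nonempty ι] : fullFibers (∅ : Finset (V × ι)) = ∅ := by
  ext v
  simp

lemma fullFibers_mono {S T : Finset (V × ι)} (h : S ⊆ T) : fullFibers S ⊆ fullFibers T :=
  fun _ hv => mem_fullFibers.2 fun i => h (mem_fullFibers.1 hv i)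

lemma fullFibers_insert_subset (S : Finset (V × ι)) (e : V × ι) :
    fullFibers (insert e S) ⊆ insert e.1 (fullFibers S) := by
  intro v hv
  by_cases hve : v = e.1
  · exact hve ▸ mem_insert_self _ _
  · refine mem_insert_of_mem (mem_fullFibers.2 fun i => ?_)
    obtain h | h := mem_insert.1 (mem_fullFibers.1 hv i)
    · exact absurd (congrArg Prod.fst h) hve
    · exact h

lemma fullFibers_insert_of_ne {S : Finset (V × ι)} {e : V × ι} {j : ι} (hj : j ≠ e.2)
    (hjS : (e.1, j) ∉ S) : fullFibers (insert e S) = fullFibers S := by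
  refine (fullFibers_mono (subset_insert e S)).antisymm' fun v hv => ?_
  have he : e.1 ∉ fullFibers (insert e S) := fun h =>
    hjS <| (mem_insert.1 (mem_fullFibers.1 h j)).resolve_left fun h' => hj (congrArg Prod.snd h')
  exact (mem_insert.1 (fullFibers_insert_subset S e hv)).resolve_left (by rintro rfl; exact he hv)

lemma card_eq_sum_card_fiber (S : Finset (V × ι)) : #S = ∑ v, #(fiber S v) := by
  simp only [fiber, card_filter]
  rw [← Fintype.sum_prod_type' (f := fun v i => if (v, i) ∈ S then 1 else 0), ← card_filter,
    filter_mem_eq_inter, univ_inter]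

lemma card_fiber_eq_min_add [Nonempty ι] (S : Finset (V × ι)) (v : V) :
    #(fiber S v) =
      min #(fiber S v) (Fintype.card ι - 1) + if v ∈ fullFibers S then 1 else 0 := by
  have hle : #(fiber S v) ≤ Fintype.card ι := card_le_univ _
  have hpos : 0 < Fintype.card ι := Fintype.card_pos
  have hfull : v ∈ fullFibers S ↔ #(fiber S v) = Fintype.card ι := by
    rw [mem_fullFibers_iff_fiber_eq_univ, card_eq_iff_eq_univ]
  split_ifs with h <;> [have := hfull.1 h; have := mt hfull.2 h] <;> omega

lemma card_eq_sum_min_add_card_fullFibers [Nonempty ι] (S : Finset (V × ι)) :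
    #S = ∑ v, min #(fiber S v) (Fintype.card ι - 1) + #(fullFibers S) := by
  rw [card_eq_sum_card_fiber, fullFibers, card_filter, ← sum_add_distrib]
  exact sum_congr rfl fun v _ => by simpa only [mem_fullFibers] using card_fiber_eq_min_add S v

lemma card_add_card_fullFibers_le [Nonempty ι] {S T : Finset (V × ι)}
    (hcrit : ∀ e ∈ T \ S, ∀ j ≠ e.2, (e.1, j) ∈ S) :
    #T + #(fullFibers S) ≤ #S + #(fullFibers T) := by
  have := sum_le_sum fun v (_ : v ∈ univ) => min_card_fiber_le_of_forall_mem hcrit v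
  rw [card_eq_sum_min_add_card_fullFibers S, card_eq_sum_min_add_card_fullFibers T]
  omega

variable {Indep : Finset V → Prop}

theorem exists_insert_indep_fullFibers_of_card_lt [Nonempty ι]
    (h_subset : ∀ X Y : Finset V, Indep Y → X ⊆ Y → Indep X)
    (h_aug : ∀ X Y : Finset V, Indep X → Indep Y → X.card < Y.card →
      ∃ e ∈ Y \ X, Indep (insert e X))
    {S T : Finset (V × ι)} (hS : Indep (fullFibers S)) (hT : Indep (fullFibers T))
    (hST : #S < #T) : ∃ e ∈ T \ S, Indep (fullFibers (insert e S)) := by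
  by_cases hcrit : ∀ e ∈ T \ S, ∀ j ≠ e.2, (e.1, j) ∈ S
  · have hlt : #(fullFibers S) < #(fullFibers T) := by
      have := card_add_card_fullFibers_le hcrit
      omega
    obtain ⟨v, hv, hind⟩ := h_aug _ _ hS hT hlt
    obtain ⟨hvT, hvS⟩ := mem_sdiff.1 hv
    obtain ⟨i, hi⟩ : ∃ i, (v, i) ∉ S := by simpa using hvS
    exact ⟨(v, i), mem_sdiff.2 ⟨mem_fullFibers.1 hvT i, hi⟩,
      h_subset _ _ hind (fullFibers_insert_subset S (v, i))⟩
  · push Not at hcrit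
    obtain ⟨e, he, j, hj, hjS⟩ := hcrit
    exact ⟨e, he, by rwa [fullFibers_insert_of_ne hj hjS]⟩

end

/-- The family of subsets of the disjoint union of `n` copies of `V`
whose coordinatewise intersection is independent in a matroid on `V` is itself the
independent-set family of a matroid. -/
theorem stmt_0 {V : Type*} [Fintype V] [DecidableEq V] (n : ℕ) (hn : 1 ≤ n)
    (Indep : Finset V → Prop)
    (h_empty : Indep ∅)
    (h_subset : ∀ X Y : Finset V, Indep Y → X ⊆ Y → Indep X)
    (h_aug : ∀ X Y : Finset V, Indep X → Indep Y → X.card < Y.card →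
      ∃ e ∈ Y \ X, Indep (insert e X))
    (tInd : Finset (V × Fin n) → Prop)
    (htInd : ∀ S : Finset (V × Fin n),
      tInd S ↔ Indep (Finset.univ.filter fun v : V => ∀ i : Fin n, (v, i) ∈ S)) :
    tInd ∅ ∧
    (∀ S T : Finset (V × Fin n), tInd T → S ⊆ T → tInd S) ∧
    (∀ S T : Finset (V × Fin n), tInd S → tInd T → S.card < T.card →
      ∃ e ∈ T \ S, tInd (insert e S)) := by
  have : Nonempty (Fin n) := ⟨⟨0, hn⟩⟩
  -- the statement's `filter` uses `Nat.decidableForallFin`, `fullFibers` the generic instance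
  have hfull : ∀ S : Finset (V × Fin n),
      (univ.filter fun v : V => ∀ i : Fin n, (v, i) ∈ S) = fullFibers S := fun S => by
    unfold fullFibers
    congr
  simp only [htInd, hfull]
  exact ⟨fullFibers_empty (V := V) (ι := Fin n) ▸ h_empty,
    fun S T hT hST => h_subset _ _ hT (fullFibers_mono hST),
    fun S T hS hT hST => exists_insert_indep_fullFibers_of_card_lt h_subset h_aug hS hT hST⟩
end

section
/- Let V be a finite set, let n ≥ 1, and let X_1,…,X_n, Y_1,…,Y_n be subsets of V with Σ_{i=1}^n |X_i| < Σ_{i=1}^n |Y_i|. For v ∈ V write X^{(v)} = {i ∈ {1,…,n} : v ∈ X_i} and Y^{(v)} = {i ∈ {1,…,n} : v ∈ Y_i}. Assume that for every v ∈ V, either X^{(v)} ⊇ Y^{(v)} or |X^{(v)}| ≥ n − 1. Then |(⋂_{i=1}^n Y_i) \ (⋂_{i=1}^n X_i)| > |(⋂_{i=1}^n X_i) \ (⋂_{i=1}^n Y_i)|. -/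
/-!
Double counting over the degrees `d_X v = #{i | v ∈ X i}`: summing them over `v` gives
`∑ i, #(X i)`, and the hypothesis on `v` is exactly what makes the pointwise bound
`[v ∈ ⋂ X \ ⋂ Y] + d_Y v ≤ [v ∈ ⋂ Y \ ⋂ X] + d_X v` hold, since `v ∈ ⋂ X` means `d_X v = n`.
Summing over `v` and comparing with `∑ |X i| < ∑ |Y i|` gives the claim.
-/

open Finset

theorem boole_add_le_boole_add {N a b : ℕ} (ha : a ≤ N) (hb : b ≤ N) (h : b ≤ a ∨ N - 1 ≤ a) :
    (if a = N ∧ ¬b = N then 1 else 0) + b ≤ (if b = N ∧ ¬a = N then 1 else 0) + a := by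
  split_ifs <;> omega

section

variable {V ι : Type*} [Fintype V] [DecidableEq V] [Fintype ι]

theorem filter_forall_mem_eq_inf (X : ι → Finset V) [DecidablePred fun v => ∀ i, v ∈ X i] :
    ({v | ∀ i, v ∈ X i} : Finset V) = univ.inf X := by
  ext v
  simp [mem_inf]

theorem card_filter_mem_eq_card_iff_mem_inf (X : ι → Finset V) (v : V) :
    #{i | v ∈ X i} = Fintype.card ι ↔ v ∈ univ.inf X := by
  simp [← card_univ, card_filter_eq_iff, mem_inf]

theorem sum_card_filter_mem_eq_sum_card (X : ι → Finset V) :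
    ∑ v, #{i | v ∈ X i} = ∑ i, #(X i) := by
  simpa [bipartiteAbove, bipartiteBelow] using
    sum_card_bipartiteAbove_eq_sum_card_bipartiteBelow (s := univ) (t := univ)
      (fun v i => v ∈ X i)

theorem card_inf_sdiff_inf_add_sum_card_le (X Y : ι → Finset V)
    (h : ∀ v, #{i | v ∈ Y i} ≤ #{i | v ∈ X i} ∨ Fintype.card ι - 1 ≤ #{i | v ∈ X i}) :
    #(univ.inf X \ univ.inf Y) + ∑ i, #(Y i) ≤ #(univ.inf Y \ univ.inf X) + ∑ i, #(X i) := by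
  rw [card_eq_sum_ite (subset_univ (univ.inf X \ univ.inf Y)),
    card_eq_sum_ite (subset_univ (univ.inf Y \ univ.inf X)),
    ← sum_card_filter_mem_eq_sum_card X, ← sum_card_filter_mem_eq_sum_card Y,
    ← sum_add_distrib, ← sum_add_distrib]
  refine sum_le_sum fun v _ => ?_
  simp only [mem_sdiff, ← card_filter_mem_eq_card_iff_mem_inf]
  exact boole_add_le_boole_add (card_le_univ _) (card_le_univ _) (h v)

end

theorem stmt_1_general {V : Type*} [Fintype V] [DecidableEq V] (n : ℕ)
    (X Y : Fin n → Finset V)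
    (hcard : ∑ i, (X i).card < ∑ i, (Y i).card)
    (hcond : ∀ v : V,
      (Finset.univ.filter fun i : Fin n => v ∈ Y i) ⊆
        (Finset.univ.filter fun i : Fin n => v ∈ X i) ∨
      n - 1 ≤ (Finset.univ.filter fun i : Fin n => v ∈ X i).card) :
    ((Finset.univ.filter fun v : V => ∀ i, v ∈ X i) \
        (Finset.univ.filter fun v : V => ∀ i, v ∈ Y i)).card <
    ((Finset.univ.filter fun v : V => ∀ i, v ∈ Y i) \
        (Finset.univ.filter fun v : V => ∀ i, v ∈ X i)).card := by
  have key := card_inf_sdiff_inf_add_sum_card_le X Y fun v => by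
    simpa using (hcond v).imp_left card_le_card
  rw [filter_forall_mem_eq_inf, filter_forall_mem_eq_inf]
  omega

/-- the key counting inequality from the proof of Lemma 4.2. -/
theorem stmt_1 {V : Type*} [Fintype V] [DecidableEq V] (n : ℕ) (hn : 1 ≤ n)
    (X Y : Fin n → Finset V)
    (hcard : ∑ i, (X i).card < ∑ i, (Y i).card)
    (hcond : ∀ v : V,
      (Finset.univ.filter fun i : Fin n => v ∈ Y i) ⊆
        (Finset.univ.filter fun i : Fin n => v ∈ X i) ∨
      n - 1 ≤ (Finset.univ.filter fun i : Fin n => v ∈ X i).card) :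
    ((Finset.univ.filter fun v : V => ∀ i, v ∈ X i) \
        (Finset.univ.filter fun v : V => ∀ i, v ∈ Y i)).card <
    ((Finset.univ.filter fun v : V => ∀ i, v ∈ Y i) \
        (Finset.univ.filter fun v : V => ∀ i, v ∈ X i)).card :=
  stmt_1_general n X Y hcard hcond
end

section
/- Let V be a finite set, let n ≥ 1, and let w : V → ℝ be a nonnegative function. Define w̃ : 2^{V × {1,…,n}} → ℝ by w̃(S) = Σ_{v ∈ ⋂_{i=1}^n X_i(S)} w(v), where X_i(S) = {v ∈ V : (v,i) ∈ S}. Then w̃ is laminar convex: there exist a laminar family ℒ of subsets of V × {1,…,n} and, for each L ∈ ℒ, a discrete convex function g_L : ℤ → ℝ ∪ {+∞}, such that w̃(S) = Σ_{L ∈ ℒ} g_L(|S ∩ L|) for every S ⊆ V × {1,…,n}. -/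
/-!
The blocks `{v} × {1, …, n}` are pairwise disjoint, hence form a laminar family, and `v` lies in
every `Xᵢ(S)` exactly when its block is contained in `S`. For any finite set `A`, the convex
function `k ↦ max (k - (|A| - 1)) 0` evaluated at `|S ∩ A|` is the indicator of `A ⊆ S`, so a
nonnegative combination of such indicators over a laminar family is laminar convex.
-/

open Finset

section LaminarConvex

variable {α : Type*} [DecidableEq α]

def IsLaminar (L : Finset (Finset α)) : Prop :=
  ∀ A ∈ L, ∀ B ∈ L, A ⊆ B ∨ B ⊆ A ∨ A ∩ B = ∅

def IsDiscreteConvex (g : ℤ → WithTop ℝ) : Prop :=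
  ∀ k : ℤ, 2 * g k ≤ g (k + 1) + g (k - 1)

def IsLaminarConvex (F : Finset α → WithTop ℝ) : Prop :=
  ∃ (L : Finset (Finset α)) (g : Finset α → ℤ → WithTop ℝ),
    IsLaminar L ∧ (∀ A ∈ L, IsDiscreteConvex (g A)) ∧ ∀ S, F S = ∑ A ∈ L, g A #(S ∩ A)

theorem isLaminar_image_of_eq_or_disjoint {ι : Type*} (s : Finset ι) (f : ι → Finset α)
    (hf : ∀ i ∈ s, ∀ j ∈ s, f i = f j ∨ Disjoint (f i) (f j)) : IsLaminar (s.image f) := by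
  simp only [IsLaminar, mem_image, forall_exists_index, and_imp]
  rintro _ i hi rfl _ j hj rfl
  rcases hf i hi j hj with heq | hdisj
  · exact Or.inl heq.subset
  · exact Or.inr (Or.inr (disjoint_iff_inter_eq_empty.mp hdisj))

theorem isDiscreteConvex_mul_max_sub {c : ℝ} (hc : 0 ≤ c) (m : ℤ) :
    IsDiscreteConvex fun k => ((c * (max (k - m) 0 : ℤ) : ℝ) : WithTop ℝ) := by
  intro k
  have hmax : 2 * max (k - m) 0 ≤ max (k + 1 - m) 0 + max (k - 1 - m) 0 := by omega
  have hreal : 2 * (c * (max (k - m) 0 : ℤ)) ≤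
      c * (max (k + 1 - m) 0 : ℤ) + c * (max (k - 1 - m) 0 : ℤ) := by
    rw [mul_left_comm, ← mul_add]
    exact mul_le_mul_of_nonneg_left (by exact_mod_cast hmax) hc
  have h2 : (2 : WithTop ℝ) = ((2 : ℝ) : WithTop ℝ) := by norm_cast
  dsimp only
  rw [h2, ← WithTop.coe_mul, ← WithTop.coe_add, WithTop.coe_le_coe]
  exact hreal

theorem max_card_inter_sub_eq_ite (S A : Finset α) :
    max ((#(S ∩ A) : ℤ) - (#A - 1)) 0 = if A ⊆ S then 1 else 0 := by
  split_ifs with hAS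
  · rw [inter_eq_right.mpr hAS]
    omega
  · have hlt : #(S ∩ A) < #A :=
      card_lt_card ⟨inter_subset_right, fun h => hAS fun _ ha => (mem_inter.mp (h ha)).1⟩
    omega

theorem isLaminarConvex_sum_filter_subset {ι : Type*} (s : Finset ι) (f : ι → Finset α)
    (hf : ∀ i ∈ s, ∀ j ∈ s, f i = f j ∨ Disjoint (f i) (f j)) (c : ι → ℝ)
    (hc : ∀ i ∈ s, 0 ≤ c i) :
    IsLaminarConvex fun S => ((∑ i ∈ s with f i ⊆ S, c i : ℝ) : WithTop ℝ) := by
  refine ⟨s.image f,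
    fun A k => (((∑ i ∈ s with f i = A, c i) * (max (k - (#A - 1)) 0 : ℤ) : ℝ) : WithTop ℝ),
    isLaminar_image_of_eq_or_disjoint s f hf,
    fun A _ => isDiscreteConvex_mul_max_sub (sum_nonneg fun i hi => hc i (mem_filter.mp hi).1) _,
    fun S => ?_⟩
  dsimp only
  rw [← WithTop.coe_sum, sum_filter]
  congr 1
  refine Eq.symm <|
    (sum_image' (fun i => c i * (max ((#(S ∩ f i) : ℤ) - (#(f i) - 1)) 0 : ℤ)) ?_).trans ?_
  · intro i _
    rw [sum_mul]
    refine sum_congr rfl fun j hj => ?_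
    rw [(mem_filter.mp hj).2]
  · refine sum_congr rfl fun i _ => ?_
    rw [max_card_inter_sub_eq_ite]
    split_ifs <;> simp

end LaminarConvex

theorem stmt_3_general {V : Type*} [Fintype V] [DecidableEq V] (n : ℕ)
    (w : V → ℝ) (hw : ∀ v, 0 ≤ w v) :
    ∃ (L : Finset (Finset (V × Fin n))) (g : Finset (V × Fin n) → ℤ → WithTop ℝ),
      (∀ A ∈ L, ∀ B ∈ L, A ⊆ B ∨ B ⊆ A ∨ A ∩ B = ∅) ∧
      (∀ A ∈ L, ∀ k : ℤ, 2 * g A k ≤ g A (k + 1) + g A (k - 1)) ∧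
      (∀ S : Finset (V × Fin n),
        ((∑ v ∈ Finset.univ.filter (fun v : V => ∀ i : Fin n, (v, i) ∈ S), w v : ℝ) : WithTop ℝ)
          = ∑ A ∈ L, g A ((S ∩ A).card : ℤ)) := by
  set block : V → Finset (V × Fin n) := fun v => {v} ×ˢ univ
  have hblock : ∀ v S, (∀ i, (v, i) ∈ S) ↔ block v ⊆ S := by
    simp [block, subset_iff]
  have hdisj : ∀ u ∈ univ, ∀ v ∈ univ, block u = block v ∨ Disjoint (block u) (block v) := by
    intro u _ v _
    rcases eq_or_ne u v with rfl | huv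
    · exact Or.inl rfl
    · exact Or.inr (disjoint_product.mpr (Or.inl (disjoint_singleton.mpr huv)))
  obtain ⟨L, g, hL, hg, hsum⟩ :=
    isLaminarConvex_sum_filter_subset univ block hdisj w fun v _ => hw v
  refine ⟨L, g, hL, hg, fun S => ?_⟩
  simp_rw [hblock]
  exact hsum S

/-- Lemma 4.4: the function `S ↦ w(⋂ᵢ Xᵢ(S))` on subsets of the disjoint
union of `n` copies of `V` is laminar convex when `w ≥ 0`. -/
theorem stmt_3 {V : Type*} [Fintype V] [DecidableEq V] (n : ℕ) (hn : 1 ≤ n)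
    (w : V → ℝ) (hw : ∀ v, 0 ≤ w v) :
    ∃ (L : Finset (Finset (V × Fin n))) (g : Finset (V × Fin n) → ℤ → WithTop ℝ),
      (∀ A ∈ L, ∀ B ∈ L, A ⊆ B ∨ B ⊆ A ∨ A ∩ B = ∅) ∧
      (∀ A ∈ L, ∀ k : ℤ, 2 * g A k ≤ g A (k + 1) + g A (k - 1)) ∧
      (∀ S : Finset (V × Fin n),
        ((∑ v ∈ Finset.univ.filter (fun v : V => ∀ i : Fin n, (v, i) ∈ S), w v : ℝ) : WithTop ℝ)
          = ∑ A ∈ L, g A ((S ∩ A).card : ℤ)) :=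
  stmt_3_general n w hw
end

section
/- Let V be a finite set, let ω_1, ω_2 : 2^V → ℝ ∪ {+∞} be valuated matroids, and let k be a nonnegative integer. Suppose X_1 ∈ dom ω_1 and X_2 ∈ dom ω_2 satisfy |X_1 ∩ X_2| ≤ k and minimize ω_1(Y_1) + ω_2(Y_2) over all pairs (Y_1, Y_2) with |Y_1 ∩ Y_2| ≤ k. If moreover |X_1 ∩ X_2| < k, then X_1 is a global minimizer of ω_1 (ω_1(X_1) ≤ ω_1(Y) for all Y ⊆ V) and X_2 is a global minimizer of ω_2. -/
/-- A valuated matroid on `2^V` with values in `ℝ ∪ {+∞}`. -/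
def IsValuatedMatroid {V : Type*} [DecidableEq V] (ω : Finset V → WithTop ℝ) : Prop :=
  (∃ X, ω X ≠ ⊤) ∧
  ∀ X Y : Finset V, ω X ≠ ⊤ → ω Y ≠ ⊤ → ∀ v ∈ X \ Y, ∃ u ∈ Y \ X,
    ω (insert u (X.erase v)) + ω (insert v (Y.erase u)) ≤ ω X + ω Y

/-!
Optimality of `(X₁, X₂)` is only tested against pairs with `|Y₁ ∩ Y₂| ≤ k`, but a single
exchange `X₁ - v + u` raises `|X₁ ∩ X₂|` by at most one, so when `|X₁ ∩ X₂| < k` every such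
exchange is feasible and `X₁` is a local minimizer of `ω₁`. For valuated matroids local
optimality is global: exchanging `v ∈ X \ Y` into `Y` does not increase `ω Y` (the loss on
the `X` side is nonnegative) and shrinks `X \ Y`, until `X ⊆ Y`, which forces `X = Y`.
-/

namespace Finset

variable {V : Type*} [DecidableEq V]

lemma sdiff_insert_erase_ssubset {X Y : Finset V} {u v : V} (hu : u ∉ X) (hv : v ∈ X \ Y) :
    X \ insert v (Y.erase u) ⊂ X \ Y := by
  rw [ssubset_iff_of_subset (by grind)]
  exact ⟨v, hv, by simp⟩

lemma card_insert_erase_inter_le (A B : Finset V) (u v : V) :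
    (insert u (A.erase v) ∩ B).card ≤ (A ∩ B).card + 1 :=
  calc (insert u (A.erase v) ∩ B).card ≤ (insert u (A ∩ B)).card :=
        card_le_card (by grind)
    _ ≤ (A ∩ B).card + 1 := card_insert_le _ _

lemma card_inter_insert_erase_le (A B : Finset V) (u v : V) :
    (A ∩ insert u (B.erase v)).card ≤ (A ∩ B).card + 1 := by
  rw [inter_comm, inter_comm A]
  exact card_insert_erase_inter_le B A u v

end Finset

namespace IsValuatedMatroid

variable {V : Type*} [DecidableEq V] {ω : Finset V → WithTop ℝ}

lemma eq_of_subset (hω : IsValuatedMatroid ω) {X Y : Finset V} (hX : ω X ≠ ⊤) (hY : ω Y ≠ ⊤)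
    (hXY : X ⊆ Y) : X = Y := by
  by_contra hne
  obtain ⟨v, hv⟩ : (Y \ X).Nonempty :=
    Finset.sdiff_nonempty.mpr fun hYX => hne (hXY.antisymm hYX)
  obtain ⟨u, hu, -⟩ := hω.2 Y X hY hX v hv
  exact (Finset.mem_sdiff.mp hu).2 (hXY (Finset.mem_sdiff.mp hu).1)

theorem le_of_forall_exchange_le (hω : IsValuatedMatroid ω) {X : Finset V} (hX : ω X ≠ ⊤)
    (hloc : ∀ v u : V, ω X ≤ ω (insert u (X.erase v))) (Y : Finset V) : ω X ≤ ω Y := by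
  by_cases hY : ω Y = ⊤
  · simp [hY]
  obtain hXY | ⟨v, hv⟩ := (X \ Y).eq_empty_or_nonempty
  · rw [hω.eq_of_subset hX hY (Finset.sdiff_eq_empty_iff_subset.mp hXY)]
  obtain ⟨u, hu, hexch⟩ := hω.2 X Y hX hY v hv
  have hdesc : X \ insert v (Y.erase u) ⊂ X \ Y :=
    Finset.sdiff_insert_erase_ssubset (Finset.mem_sdiff.mp hu).2 hv
  have hY' : ω (insert v (Y.erase u)) ≤ ω Y :=
    (WithTop.add_le_add_iff_left hX).mp ((add_le_add_left (hloc v u) _).trans hexch)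
  exact (hω.le_of_forall_exchange_le hX hloc _).trans hY'
termination_by (X \ Y).card
decreasing_by exact Finset.card_lt_card hdesc

end IsValuatedMatroid

theorem stmt_13_general {V : Type*} [DecidableEq V]
    (ω₁ ω₂ : Finset V → WithTop ℝ)
    (hω₁ : IsValuatedMatroid ω₁) (hω₂ : IsValuatedMatroid ω₂)
    (k : ℕ) (X₁ X₂ : Finset V) (hX₁ : ω₁ X₁ ≠ ⊤) (hX₂ : ω₂ X₂ ≠ ⊤)
    (hopt : ∀ Y₁ Y₂ : Finset V, (Y₁ ∩ Y₂).card ≤ k → ω₁ X₁ + ω₂ X₂ ≤ ω₁ Y₁ + ω₂ Y₂)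
    (hlt : (X₁ ∩ X₂).card < k) :
    (∀ Y : Finset V, ω₁ X₁ ≤ ω₁ Y) ∧ (∀ Y : Finset V, ω₂ X₂ ≤ ω₂ Y) := by
  constructor
  · refine hω₁.le_of_forall_exchange_le hX₁ fun v u => ?_
    have hk := (Finset.card_insert_erase_inter_le X₁ X₂ u v).trans hlt
    exact (WithTop.add_le_add_iff_right hX₂).mp (hopt _ X₂ hk)
  · refine hω₂.le_of_forall_exchange_le hX₂ fun v u => ?_
    have hk := (Finset.card_inter_insert_erase_le X₁ X₂ u v).trans hlt
    exact (WithTop.add_le_add_iff_left hX₁).mp (hopt X₁ _ hk)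

/-- if `(X₁, X₂)` is optimal for (V_{≤k}) and `|X₁ ∩ X₂| < k`, then `X₁`
and `X₂` are global minimizers of `ω₁` and `ω₂`, respectively. -/
theorem stmt_13 {V : Type*} [Fintype V] [DecidableEq V]
    (ω₁ ω₂ : Finset V → WithTop ℝ)
    (hω₁ : IsValuatedMatroid ω₁) (hω₂ : IsValuatedMatroid ω₂)
    (k : ℕ) (X₁ X₂ : Finset V) (hX₁ : ω₁ X₁ ≠ ⊤) (hX₂ : ω₂ X₂ ≠ ⊤)
    (hle : (X₁ ∩ X₂).card ≤ k)
    (hopt : ∀ Y₁ Y₂ : Finset V, (Y₁ ∩ Y₂).card ≤ k → ω₁ X₁ + ω₂ X₂ ≤ ω₁ Y₁ + ω₂ Y₂)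
    (hlt : (X₁ ∩ X₂).card < k) :
    (∀ Y : Finset V, ω₁ X₁ ≤ ω₁ Y) ∧ (∀ Y : Finset V, ω₂ X₂ ≤ ω₂ Y) :=
  stmt_13_general ω₁ ω₂ hω₁ hω₂ k X₁ X₂ hX₁ hX₂ hopt hlt
end

section
/- Let V be a finite set, let M_1 and M_2 be matroids on V with base families ℬ_1 and ℬ_2, let w_1, w_2 : V → ℝ, and let k be a nonnegative integer. Let X_1 ∈ ℬ_1 and X_2 ∈ ℬ_2 with |X_1 ∩ X_2| = k. Suppose there exist functions q_1 : V → ℝ with q_1 ≥ 0, q_2 : V → ℝ with q_2 ≤ 0, and a real λ ≥ 0 such that: (i) q_1(v) = q_2(v) + λ for every v ∈ V; (ii) X_1 minimizes Y ↦ Σ_{v∈Y}(w_1(v) − q_1(v)) over ℬ_1, and X_2 minimizes Y ↦ Σ_{v∈Y}(w_2(v) + q_2(v)) over ℬ_2; (iii) q_1(v) = 0 for every v ∈ X_1 \ X_2 and q_2(v) = 0 for every v ∈ X_2 \ X_1. Then (X_1, X_2) is optimal for problem (W_{=k}): for all Y_1 ∈ ℬ_1 and Y_2 ∈ ℬ_2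 with |Y_1 ∩ Y_2| = k, Σ_{v∈X_1} w_1(v) + Σ_{v∈X_2} w_2(v) ≤ Σ_{v∈Y_1} w_1(v) + Σ_{v∈Y_2} w_2(v). -/
/-!
Complementary slackness: because `q₁` vanishes on `X₁ \ X₂` and `q₂` on `X₂ \ X₁`, the
Lagrangian terms of `(X₁, X₂)` add up to exactly `λ k`, while the sign conditions on
`q₁, q₂` make them at least `λ k` for every feasible `(Y₁, Y₂)`. Adding the two
minimality conditions of the Lagrangian relaxation then gives the claim.
-/

open Finset

section Slackness

variable {V : Type*} [DecidableEq V] {s t : Finset V} {f g : V → ℝ}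

theorem sum_sub_sum_eq_sum_inter_add (s t : Finset V) (f g : V → ℝ) :
    ∑ v ∈ s, f v - ∑ v ∈ t, g v =
      ∑ v ∈ s ∩ t, (f v - g v) + ∑ v ∈ s \ t, f v - ∑ v ∈ t \ s, g v := by
  rw [← sum_inter_add_sum_sdiff s t f, ← sum_inter_add_sum_sdiff t s g, inter_comm t s,
    sum_sub_distrib]
  ring

theorem sum_sub_sum_eq_sum_inter (hf : ∀ v ∈ s \ t, f v = 0) (hg : ∀ v ∈ t \ s, g v = 0) :
    ∑ v ∈ s, f v - ∑ v ∈ t, g v = ∑ v ∈ s ∩ t, (f v - g v) := by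
  rw [sum_sub_sum_eq_sum_inter_add, sum_eq_zero hf, sum_eq_zero hg]
  ring

theorem sum_inter_le_sum_sub_sum (hf : ∀ v ∈ s \ t, 0 ≤ f v) (hg : ∀ v ∈ t \ s, g v ≤ 0) :
    ∑ v ∈ s ∩ t, (f v - g v) ≤ ∑ v ∈ s, f v - ∑ v ∈ t, g v := by
  rw [sum_sub_sum_eq_sum_inter_add]
  linarith [sum_nonneg hf, sum_nonpos hg]

end Slackness

theorem stmt_15_general {V : Type*} [DecidableEq V]
    (B₁ B₂ : Finset V → Prop)
    (w₁ w₂ : V → ℝ) (k : ℕ)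
    (X₁ X₂ : Finset V) (hcard : (X₁ ∩ X₂).card = k)
    (q₁ q₂ : V → ℝ) (lam : ℝ)
    (hq₁ : ∀ v, 0 ≤ q₁ v) (hq₂ : ∀ v, q₂ v ≤ 0)
    (hshift : ∀ v, q₁ v = q₂ v + lam)
    (hmin₁ : ∀ Y : Finset V, B₁ Y →
      ∑ v ∈ X₁, (w₁ v - q₁ v) ≤ ∑ v ∈ Y, (w₁ v - q₁ v))
    (hmin₂ : ∀ Y : Finset V, B₂ Y →
      ∑ v ∈ X₂, (w₂ v + q₂ v) ≤ ∑ v ∈ Y, (w₂ v + q₂ v))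
    (hzero₁ : ∀ v ∈ X₁ \ X₂, q₁ v = 0)
    (hzero₂ : ∀ v ∈ X₂ \ X₁, q₂ v = 0) :
    ∀ Y₁ Y₂ : Finset V, B₁ Y₁ → B₂ Y₂ → (Y₁ ∩ Y₂).card = k →
      ∑ v ∈ X₁, w₁ v + ∑ v ∈ X₂, w₂ v ≤ ∑ v ∈ Y₁, w₁ v + ∑ v ∈ Y₂, w₂ v := by
  intro Y₁ Y₂ hY₁ hY₂ hYcard
  have hgap (s : Finset V) : ∑ v ∈ s, (q₁ v - q₂ v) = s.card * lam := by
    simp [hshift]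
  have hX : ∑ v ∈ X₁, q₁ v - ∑ v ∈ X₂, q₂ v = k * lam := by
    rw [sum_sub_sum_eq_sum_inter hzero₁ hzero₂, hgap, hcard]
  have hY : (k : ℝ) * lam ≤ ∑ v ∈ Y₁, q₁ v - ∑ v ∈ Y₂, q₂ v := by
    rw [← hYcard, ← hgap]
    exact sum_inter_le_sum_sub_sum (fun v _ => hq₁ v) (fun v _ => hq₂ v)
  have h₁ := hmin₁ Y₁ hY₁
  have h₂ := hmin₂ Y₂ hY₂
  simp only [sum_sub_distrib, sum_add_distrib] at h₁ h₂
  linarith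

/-- sufficiency of an LPT optimality witness `(q₁, q₂, λ)` for optimality
of `(X₁, X₂)` in problem (W_{=k}). Matroids are given by their base families, which are
nonempty and satisfy the basis-exchange axiom. -/
theorem stmt_15 {V : Type*} [Fintype V] [DecidableEq V]
    (B₁ B₂ : Finset V → Prop)
    (hne₁ : ∃ X, B₁ X) (hne₂ : ∃ X, B₂ X)
    (hex₁ : ∀ X Y : Finset V, B₁ X → B₁ Y → ∀ v ∈ X \ Y, ∃ u ∈ Y \ X,
      B₁ (insert u (X.erase v)))
    (hex₂ : ∀ X Y : Finset V, B₂ X → B₂ Y → ∀ v ∈ X \ Y, ∃ u ∈ Y \ X,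
      B₂ (insert u (X.erase v)))
    (w₁ w₂ : V → ℝ) (k : ℕ)
    (X₁ X₂ : Finset V) (hX₁ : B₁ X₁) (hX₂ : B₂ X₂) (hcard : (X₁ ∩ X₂).card = k)
    (q₁ q₂ : V → ℝ) (lam : ℝ)
    (hq₁ : ∀ v, 0 ≤ q₁ v) (hq₂ : ∀ v, q₂ v ≤ 0) (hlam : 0 ≤ lam)
    (hshift : ∀ v, q₁ v = q₂ v + lam)
    (hmin₁ : ∀ Y : Finset V, B₁ Y →
      ∑ v ∈ X₁, (w₁ v - q₁ v) ≤ ∑ v ∈ Y, (w₁ v - q₁ v))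
    (hmin₂ : ∀ Y : Finset V, B₂ Y →
      ∑ v ∈ X₂, (w₂ v + q₂ v) ≤ ∑ v ∈ Y, (w₂ v + q₂ v))
    (hzero₁ : ∀ v ∈ X₁ \ X₂, q₁ v = 0)
    (hzero₂ : ∀ v ∈ X₂ \ X₁, q₂ v = 0) :
    ∀ Y₁ Y₂ : Finset V, B₁ Y₁ → B₂ Y₂ → (Y₁ ∩ Y₂).card = k →
      ∑ v ∈ X₁, w₁ v + ∑ v ∈ X₂, w₂ v ≤ ∑ v ∈ Y₁, w₁ v + ∑ v ∈ Y₂, w₂ v :=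
  stmt_15_general B₁ B₂ w₁ w₂ k X₁ X₂ hcard q₁ q₂ lam hq₁ hq₂ hshift hmin₁ hmin₂ hzero₁ hzero₂
end
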